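/- arXiv:1903.11514 — 7 statements merged into one kernel-verified Lean document; each statement's English description precedes it below -/
import Mathlib

section
/- For each integer N ≥ 1, let X^(N) be the N×N complex matrix with entries X_{i,j} = N^(−1/2)·e[√2·i·j²], H^(N) = [[0, X^(N)],[(X^(N))*, 0]], and μ^(4)_N := (1/(2N))·Tr((H^(N))⁴). Then for every N ≥ 1, μ^(4)_N ≥ 1 + (4/(π²·N³)) · Σ_{1 ≤ j₁, j₂ ≤ N, j₁ ≠ j₂} ( ‖N·√2·(j₁² − j₂²)‖_T / ‖√2·(j₁² − j₂²)‖_T )². (The denominators are nonzero since √2 is irrational and j₁ ≠ j₂.) -/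
open scoped BigOperators
open MeasureTheory

/-- `e[t] = exp(2πit)`. -/
noncomputable def expc (t : ℝ) : ℂ := Complex.exp (2 * Real.pi * Complex.I * t)

/-- `‖x‖_T`, the distance from `x` to the nearest integer. -/
noncomputable def distT (x : ℝ) : ℝ := |x - round x|

/-- The deterministic model B matrix: `X_{i,j} = N^{-1/2} e[√2 · i · j²]` for
`1 ≤ i, j ≤ N` (`i : Fin N` corresponds to row `i+1`, etc.). -/
noncomputable def XB (N : ℕ) : Matrix (Fin N) (Fin N) ℂ :=
  fun i j =>
    ((Real.sqrt N : ℝ) : ℂ)⁻¹ *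
      expc (Real.sqrt 2 * (((i : ℕ) : ℝ) + 1) * ((((j : ℕ) : ℝ) + 1) ^ 2))

/-- The associated Hermitian block matrix `H = [[0, X], [X*, 0]]`. -/
noncomputable def HB (N : ℕ) : Matrix (Fin N ⊕ Fin N) (Fin N ⊕ Fin N) ℂ :=
  Matrix.fromBlocks 0 (XB N) (XB N).conjTranspose 0

/-- The fourth moment `μ^{(4)}_N = (1/(2N)) Tr(H⁴)` (a real number). -/
noncomputable def mu4 (N : ℕ) : ℝ := ((2 * (N : ℂ))⁻¹ * (HB N ^ 4).trace).re

/-! Let `A = X*X` be the Gram matrix of `X`. Then `Tr(H⁴) = 2 Tr(A²) = 2 ∑ |A_{j₁j₂}|²`, and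
`N A_{j₁j₂}` is a geometric sum `∑ᵢ e[x i]` with `x = √2 (j₂² - j₁²)`, whose squared modulus is
`sin²(πNx) / sin²(πx)`. The diagonal `x = 0` contributes exactly `N³`, which gives the `1`; off the
diagonal, `2‖x‖_T ≤ |sin πx| ≤ π‖x‖_T` bounds the ratio below by `(4/π²)(‖Nx‖_T / ‖x‖_T)²`. -/

open Complex Finset Real Matrix

lemma expc_eq_exp_I_mul (t : ℝ) : expc t = exp (I * (2 * π * t : ℝ)) := by
  rw [expc]; push_cast; ring_nf

lemma expc_zero : expc 0 = 1 := by simp [expc]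

lemma expc_add (a b : ℝ) : expc (a + b) = expc a * expc b := by
  simp only [expc, ← Complex.exp_add]; push_cast; ring_nf

lemma conj_expc (t : ℝ) : starRingEnd ℂ (expc t) = expc (-t) := by
  rw [expc, expc, ← Complex.exp_conj]; simp [map_ofNat]

lemma normSq_expc (t : ℝ) : normSq (expc t) = 1 := by
  rw [normSq_eq_norm_sq, expc_eq_exp_I_mul, mul_comm, norm_exp_ofReal_mul_I, one_pow]

lemma expc_mul_natCast (x : ℝ) (n : ℕ) : expc (x * n) = expc x ^ n := by
  rw [expc, expc, ← Complex.exp_nat_mul]; push_cast; ring_nf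

lemma norm_expc_sub_one (t : ℝ) : ‖expc t - 1‖ = 2 * |Real.sin (π * t)| := by
  rw [expc_eq_exp_I_mul, norm_exp_I_mul_ofReal_sub_one, norm_mul, Real.norm_eq_abs,
    Real.norm_eq_abs, abs_two]
  ring_nf

lemma abs_sin_pi_mul_sub_round (x : ℝ) :
    |Real.sin (π * (x - round x))| = |Real.sin (π * x)| := by
  rw [mul_sub, mul_comm π (round x : ℝ), Real.sin_sub_int_mul_pi, abs_mul, abs_zpow, abs_neg,
    abs_one, _root_.one_zpow, one_mul]

lemma two_mul_distT_le_abs_sin (x : ℝ) : 2 * distT x ≤ |Real.sin (π * x)| := by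
  have h := Real.mul_abs_le_abs_sin (x := π * (x - round x)) (by
    rw [abs_mul, abs_of_pos pi_pos]; nlinarith [abs_sub_round x, pi_pos])
  rw [abs_sin_pi_mul_sub_round, abs_mul, abs_of_pos pi_pos, ← mul_assoc,
    div_mul_cancel₀ _ pi_ne_zero] at h
  exact h

lemma abs_sin_le_pi_mul_distT (x : ℝ) : |Real.sin (π * x)| ≤ π * distT x := by
  rw [← abs_sin_pi_mul_sub_round, distT, ← abs_of_pos pi_pos, ← abs_mul, abs_of_pos pi_pos]
  exact Real.abs_sin_le_abs

lemma normSq_sum_range_expc_mul (N : ℕ) {x : ℝ} (hx : Real.sin (π * x) ≠ 0) :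
    normSq (∑ i ∈ range N, expc (x * i)) = Real.sin (π * (N * x)) ^ 2 / Real.sin (π * x) ^ 2 := by
  have h1 : expc x ≠ 1 := fun h => by
    simpa [h, hx] using norm_expc_sub_one x
  simp_rw [expc_mul_natCast]
  rw [geom_sum_eq h1, ← expc_mul_natCast, normSq_div, normSq_eq_norm_sq, normSq_eq_norm_sq,
    norm_expc_sub_one, norm_expc_sub_one, mul_comm x]
  rw [mul_pow, mul_pow, sq_abs, sq_abs]
  field_simp

lemma sq_distT_div_le_normSq_sum_expc (N : ℕ) (x : ℝ) :
    4 / π ^ 2 * (distT (N * x) / distT x) ^ 2 ≤ normSq (∑ i ∈ range N, expc (x * (i + 1))) := by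
  rcases eq_or_ne (Real.sin (π * x)) 0 with hx | hx
  · -- then `distT x = 0`, and the left side vanishes because `a / 0 = 0`
    have hx0 : distT x = 0 := by
      have := two_mul_distT_le_abs_sin x
      rw [hx, abs_zero] at this
      exact le_antisymm (by linarith) (abs_nonneg _)
    simp [hx0, normSq_nonneg]
  have hshift : ∑ i ∈ range N, expc (x * (i + 1)) = expc x * ∑ i ∈ range N, expc (x * i) := by
    rw [mul_sum]; exact sum_congr rfl fun i _ => by rw [← expc_add]; ring_nf
  rw [hshift, normSq_mul, normSq_expc, one_mul, normSq_sum_range_expc_mul N hx,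
    ← sq_abs (Real.sin (π * (N * x))), ← sq_abs (Real.sin (π * x))]
  calc 4 / π ^ 2 * (distT (N * x) / distT x) ^ 2
      = (2 * distT (N * x)) ^ 2 / (π * distT x) ^ 2 := by ring
    _ ≤ |Real.sin (π * (N * x))| ^ 2 / |Real.sin (π * x)| ^ 2 := by
      have : 0 ≤ distT (N * x) := abs_nonneg _
      gcongr
      · exact two_mul_distT_le_abs_sin _
      · exact abs_sin_le_pi_mul_distT x

namespace Matrix

variable {m n α : Type*} [Fintype m] [Fintype n]

lemma trace_fromBlocks [AddCommMonoid α] (A : Matrix m m α) (B : Matrix m n α)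
    (C : Matrix n m α) (D : Matrix n n α) : (fromBlocks A B C D).trace = A.trace + D.trace := by
  simp [trace, Fintype.sum_sum_type]

lemma trace_fromBlocks_conjTranspose_pow_four [DecidableEq m] [DecidableEq n] [CommRing α]
    [StarRing α] (X : Matrix m n α) :
    (fromBlocks 0 X Xᴴ 0 ^ 4).trace = 2 * (Xᴴ * X * (Xᴴ * X)).trace := by
  have hsq : fromBlocks 0 X Xᴴ 0 ^ 2 = fromBlocks (X * Xᴴ) 0 0 (Xᴴ * X) := by
    simp [sq, fromBlocks_multiply]
  rw [show 4 = 2 * 2 from rfl, pow_mul, hsq, sq, fromBlocks_multiply, trace_fromBlocks]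
  simp only [Matrix.mul_zero, add_zero, zero_add]
  rw [Matrix.mul_assoc, trace_mul_comm, two_mul]
  simp only [Matrix.mul_assoc]

lemma IsHermitian.trace_mul_self {A : Matrix n n ℂ} (hA : A.IsHermitian) :
    (A * A).trace = ∑ i, ∑ j, (normSq (A i j) : ℂ) := by
  simp only [trace, diag, mul_apply]
  refine sum_congr rfl fun i _ => sum_congr rfl fun j _ => ?_
  rw [← hA.apply j i, Complex.star_def, Complex.mul_conj]

end Matrix

lemma conjTranspose_XB_mul_XB_apply (N : ℕ) (j₁ j₂ : Fin N) :
    ((XB N)ᴴ * XB N) j₁ j₂ = (N : ℂ)⁻¹ * ∑ i ∈ range N,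
      expc (√2 * ((j₂ + 1 : ℝ) ^ 2 - (j₁ + 1 : ℝ) ^ 2) * (i + 1)) := by
  have hc : starRingEnd ℂ ((√N : ℝ) : ℂ)⁻¹ * ((√N : ℝ) : ℂ)⁻¹ = (N : ℂ)⁻¹ := by
    rw [map_inv₀, conj_ofReal, ← mul_inv, ← ofReal_mul, Real.mul_self_sqrt (Nat.cast_nonneg N),
      ofReal_natCast]
  rw [mul_apply, ← Fin.sum_univ_eq_sum_range
    (fun i => expc (√2 * ((j₂ + 1 : ℝ) ^ 2 - (j₁ + 1 : ℝ) ^ 2) * (i + 1))), mul_sum]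
  refine sum_congr rfl fun i _ => ?_
  rw [conjTranspose_apply, XB, XB, star_mul', Complex.star_def, conj_expc, mul_mul_mul_comm, hc,
    ← expc_add]
  ring_nf

lemma Fin.sum_univ_add_one_eq_sum_Icc {M : Type*} [AddCommMonoid M] (N : ℕ) (f : ℕ → M) :
    ∑ j : Fin N, f (j + 1) = ∑ j ∈ Icc 1 N, f j := by
  rw [Fin.sum_univ_eq_sum_range (fun j => f (j + 1)), ← Ico_add_one_right_eq_Icc,
    sum_Ico_eq_sum_range, Nat.add_sub_cancel]
  simp [add_comm]

lemma mu4_eq (N : ℕ) :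
    mu4 N = ((N : ℝ) ^ 3)⁻¹ * ∑ j₁ ∈ Icc 1 N, ∑ j₂ ∈ Icc 1 N,
      normSq (∑ i ∈ range N, expc (√2 * ((j₁ : ℝ) ^ 2 - (j₂ : ℝ) ^ 2) * (i + 1))) := by
  rw [mu4, HB, trace_fromBlocks_conjTranspose_pow_four,
    (isHermitian_conjTranspose_mul_self _).trace_mul_self]
  simp_rw [conjTranspose_XB_mul_XB_apply, normSq_mul, normSq_inv, normSq_natCast]
  rw [sum_comm]
  simp_rw [← Fin.sum_univ_add_one_eq_sum_Icc N]
  push_cast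
  simp_rw [← mul_sum, ← ofReal_sum]
  have hscalar (S : ℝ) :
      ((2 * (N : ℂ))⁻¹ * (2 * ((N * N : ℂ)⁻¹ * S))).re = ((N : ℝ) ^ 3)⁻¹ * S := by
    rw [show (2 * (N : ℂ))⁻¹ * (2 * ((N * N : ℂ)⁻¹ * S)) = (((N : ℝ) ^ 3)⁻¹ * S : ℝ) by
      push_cast; field_simp, ofReal_re]
  exact hscalar _

lemma Finset.sum_sum_eq_sum_diag_add_sum_sum_ne {ι M : Type*} [DecidableEq ι] [AddCommMonoid M]
    (s : Finset ι) (f : ι → ι → M) :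
    ∑ i ∈ s, ∑ j ∈ s, f i j = ∑ i ∈ s, f i i + ∑ i ∈ s, ∑ j ∈ s, if i ≠ j then f i j else 0 := by
  rw [← sum_add_distrib]
  refine sum_congr rfl fun i hi => ?_
  have hsingle := sum_ite_eq s i (f i)
  rw [if_pos hi] at hsingle
  rw [← hsingle, ← sum_add_distrib]
  exact sum_congr rfl fun j _ => by by_cases h : i = j <;> simp [h]

theorem statement10 (N : ℕ) (hN : 1 ≤ N) :
    1 + 4 / (Real.pi ^ 2 * (N : ℝ) ^ 3) *
      ∑ j₁ ∈ Finset.Icc 1 N, ∑ j₂ ∈ Finset.Icc 1 N,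
        (if j₁ ≠ j₂ then
          (distT ((N : ℝ) * Real.sqrt 2 * ((j₁ : ℝ) ^ 2 - (j₂ : ℝ) ^ 2)) /
            distT (Real.sqrt 2 * ((j₁ : ℝ) ^ 2 - (j₂ : ℝ) ^ 2))) ^ 2
        else 0)
      ≤ mu4 N := by
  set S : ℕ → ℕ → ℝ := fun j₁ j₂ =>
    normSq (∑ i ∈ range N, expc (√2 * ((j₁ : ℝ) ^ 2 - (j₂ : ℝ) ^ 2) * (i + 1)))
  have hdiag (j : ℕ) : S j j = (N : ℝ) ^ 2 := by simp [S, expc_zero, sq]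
  have hoff (j₁ j₂ : ℕ) : 4 / π ^ 2 * (distT (N * √2 * ((j₁ : ℝ) ^ 2 - (j₂ : ℝ) ^ 2)) /
      distT (√2 * ((j₁ : ℝ) ^ 2 - (j₂ : ℝ) ^ 2))) ^ 2 ≤ S j₁ j₂ := by
    rw [mul_assoc (N : ℝ)]
    exact sq_distT_div_le_normSq_sum_expc N _
  have hN3 : (N : ℝ) ^ 3 ≠ 0 := by positivity
  calc _ = ((N : ℝ) ^ 3)⁻¹ * (∑ j ∈ Icc 1 N, S j j + 4 / π ^ 2 * ∑ j₁ ∈ Icc 1 N, ∑ j₂ ∈ Icc 1 N,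
          if j₁ ≠ j₂ then (distT (N * √2 * ((j₁ : ℝ) ^ 2 - (j₂ : ℝ) ^ 2)) /
            distT (√2 * ((j₁ : ℝ) ^ 2 - (j₂ : ℝ) ^ 2))) ^ 2 else 0) := by
        rw [sum_congr rfl fun j _ => hdiag j, sum_const, Nat.card_Icc, Nat.add_sub_cancel,
          nsmul_eq_mul]
        field_simp
    _ ≤ ((N : ℝ) ^ 3)⁻¹ * (∑ j ∈ Icc 1 N, S j j + ∑ j₁ ∈ Icc 1 N, ∑ j₂ ∈ Icc 1 N,
          if j₁ ≠ j₂ then S j₁ j₂ else 0) := by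
        simp_rw [mul_sum, mul_ite, mul_zero]
        gcongr with j₁ _ j₂ _
        split_ifs
        exacts [hoff j₁ j₂, le_rfl]
    _ = mu4 N := by rw [← sum_sum_eq_sum_diag_add_sum_sum_ne, mu4_eq]
end

section
/- Let p ≥ 1 be a real number and let α ∈ ℝ satisfy the Diophantine condition: there exists C_α > 0 with ‖n·α‖_T ≥ C_α/n^p for every integer n ≥ 1. Then there exists a constant C > 0 (depending only on C_α and p) such that for all integers N ≥ 1 and l ≥ 0, the set { n : 1 ≤ n ≤ (N−1)², ‖n·α‖_T ≤ 2^(−l) } has cardinality at most C·N²·2^(−l/p). -/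
open scoped BigOperators

lemma distT_eq_norm (x : ℝ) : distT x = ‖(x : AddCircle (1:ℝ))‖ := by
  rw [AddCircle.norm_eq]
  simp [distT]

lemma distT_sub_le (a b : ℝ) : distT (a - b) ≤ distT a + distT b := by
  simp only [distT_eq_norm]
  have h : ((a - b : ℝ) : AddCircle (1:ℝ)) = (a : AddCircle (1:ℝ)) - (b : AddCircle (1:ℝ)) := rfl
  rw [h]
  exact norm_sub_le _ _


lemma count_sep (M : ℕ) (D : ℝ) (hD : 0 < D) (S : Set ℕ)
    (hSub : ∀ n ∈ S, 1 ≤ n ∧ n ≤ M)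
    (hsep : ∀ m ∈ S, ∀ n ∈ S, m < n → D ≤ (n : ℝ) - (m : ℝ)) :
    (S.ncard : ℝ) ≤ (M : ℝ) / D + 1 := by
  set k := ⌈D⌉₊ with hk
  have hk1 : 1 ≤ k := Nat.one_le_ceil_iff.mpr hD
  have hgap : ∀ m ∈ S, ∀ n ∈ S, m < n → m + k ≤ n := by
    intro m hm n hn hmn
    have : k ≤ n - m := Nat.ceil_le.mpr (by rw [Nat.cast_sub hmn.le]; exact hsep m hm n hn hmn)
    omega
  have hmono : ∀ m ∈ S, ∀ n ∈ S, m < n → (m - 1) / k < (n - 1) / k := by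
    intro m hm n hn hmn
    have h1 := (hSub m hm).1
    have h2 := hgap m hm n hn hmn
    have hle : m - 1 + k ≤ n - 1 := by omega
    calc (m - 1) / k < (m - 1) / k + 1 := Nat.lt_succ_self _
    _ = (m - 1 + k) / k := (Nat.add_div_right _ hk1).symm
    _ ≤ (n - 1) / k := Nat.div_le_div_right hle
  have hinj : Set.InjOn (fun n => (n - 1) / k) S := by
    intro a ha b hb hab
    by_contra hne
    rcases Nat.lt_or_ge a b with h | h
    · exact absurd hab (Nat.ne_of_lt (hmono a ha b hb h))
    · exact absurd hab.symm (Nat.ne_of_lt (hmono b hb a ha (lt_of_le_of_ne h (Ne.symm hne))))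
  have hmaps : ∀ n ∈ S, (n - 1) / k ∈ Set.Iio ((M - 1) / k + 1) := by
    intro n hn
    rw [Set.mem_Iio, Nat.lt_succ_iff]
    exact Nat.div_le_div_right (by have := (hSub n hn).2; omega)
  have hcard : S.ncard ≤ (M - 1) / k + 1 := by
    have h := Set.ncard_le_ncard_of_injOn _ hmaps hinj (Set.finite_Iio _)
    rwa [← Finset.coe_Iio, Set.ncard_coe_finset, Nat.card_Iio] at h
  have hkpos : (0:ℝ) < k := by exact_mod_cast hk1
  calc (S.ncard : ℝ) ≤ (((M - 1) / k + 1 : ℕ) : ℝ) := by exact_mod_cast hcard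
  _ = (((M - 1) / k : ℕ) : ℝ) + 1 := by push_cast; ring
  _ ≤ ((M - 1 : ℕ) : ℝ) / (k : ℝ) + 1 := by gcongr; exact Nat.cast_div_le
  _ ≤ (M : ℝ) / D + 1 := by
      gcongr
      · exact_mod_cast Nat.cast_le.mpr (Nat.sub_le M 1)
      · exact Nat.le_ceil D

theorem statement13 (p : ℝ) (hp : 1 ≤ p) (α : ℝ) (Cα : ℝ) (hCα : 0 < Cα)
    (hdio : ∀ n : ℕ, 1 ≤ n → Cα / (n : ℝ) ^ p ≤ distT ((n : ℝ) * α)) :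
    ∃ C : ℝ, 0 < C ∧ ∀ N : ℕ, 1 ≤ N → ∀ l : ℕ,
      ({n : ℕ | 1 ≤ n ∧ n ≤ (N - 1) ^ 2 ∧
          distT ((n : ℝ) * α) ≤ (2 : ℝ) ^ (-(l : ℝ))}.ncard : ℝ)
        ≤ C * (N : ℝ) ^ 2 * (2 : ℝ) ^ (-(l : ℝ) / p) := by
  have hp0 : 0 < p := lt_of_lt_of_le one_pos hp
  refine ⟨(2 / Cα) ^ (1 / p) + Cα⁻¹ ^ (1 / p), by positivity, ?_⟩
  intro N hN l
  set M := (N - 1) ^ 2 with hM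
  set S := {n : ℕ | 1 ≤ n ∧ n ≤ M ∧ distT ((n : ℝ) * α) ≤ (2 : ℝ) ^ (-(l : ℝ))} with hS
  by_cases hne : S.Nonempty
  case neg =>
    rw [Set.not_nonempty_iff_eq_empty.mp hne, Set.ncard_empty, Nat.cast_zero]
    positivity
  obtain ⟨n₀, hn₀1, hn₀M, hn₀d⟩ := hne
  have hMN : (M : ℝ) ≤ (N : ℝ) ^ 2 := by
    have : M ≤ N ^ 2 := Nat.pow_le_pow_left (Nat.sub_le N 1) 2
    calc (M : ℝ) ≤ ((N ^ 2 : ℕ) : ℝ) := by exact_mod_cast this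
    _ = (N : ℝ) ^ 2 := by push_cast; ring
  -- key bound from nonemptiness
  have hCp : (0:ℝ) < Cα ^ (1 / p) := Real.rpow_pos_of_pos hCα _
  have h2lp : (0:ℝ) < (2:ℝ) ^ ((l:ℝ) / p) := Real.rpow_pos_of_pos two_pos _
  have hNbig : Cα ^ (1 / p) * (2:ℝ) ^ ((l:ℝ) / p) ≤ (N : ℝ) ^ 2 := by
    have hn₀p : (0:ℝ) < (n₀ : ℝ) ^ p := Real.rpow_pos_of_pos (by exact_mod_cast hn₀1) _
    have h1 : Cα / (n₀ : ℝ) ^ p ≤ (2:ℝ) ^ (-(l:ℝ)) := le_trans (hdio n₀ hn₀1) hn₀d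
    have h2 : Cα * (2:ℝ) ^ ((l:ℝ)) ≤ (n₀ : ℝ) ^ p := by
      rw [div_le_iff₀ hn₀p] at h1
      calc Cα * (2:ℝ) ^ ((l:ℝ)) ≤ ((2:ℝ) ^ (-(l:ℝ)) * (n₀:ℝ) ^ p) * (2:ℝ) ^ ((l:ℝ)) := by
            gcongr
      _ = (n₀:ℝ) ^ p * ((2:ℝ) ^ (-(l:ℝ)) * (2:ℝ) ^ ((l:ℝ))) := by ring
      _ = (n₀:ℝ) ^ p := by
            rw [← Real.rpow_add two_pos]; simp
    have h3 : (Cα * (2:ℝ) ^ ((l:ℝ))) ^ (1/p) ≤ ((n₀:ℝ) ^ p) ^ (1/p) :=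
      Real.rpow_le_rpow (by positivity) h2 (by positivity)
    have h4 : ((n₀:ℝ) ^ p) ^ (1/p) = (n₀ : ℝ) := by
      rw [← Real.rpow_mul (Nat.cast_nonneg n₀), mul_one_div, div_self hp0.ne', Real.rpow_one]
    have h5 : (Cα * (2:ℝ) ^ ((l:ℝ))) ^ (1/p) = Cα ^ (1/p) * (2:ℝ) ^ ((l:ℝ)/p) := by
      rw [Real.mul_rpow hCα.le (by positivity), ← Real.rpow_mul two_pos.le, mul_one_div]
    rw [h4, h5] at h3
    have h6 : (n₀ : ℝ) ≤ (M : ℝ) := by exact_mod_cast hn₀M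
    exact h3.trans (h6.trans hMN)
  have hone : (1:ℝ) ≤ Cα⁻¹ ^ (1/p) * (N:ℝ)^2 * (2:ℝ) ^ (-(l:ℝ)/p) := by
    have heq : Cα⁻¹ ^ (1/p) * (N:ℝ)^2 * (2:ℝ) ^ (-(l:ℝ)/p)
        = (N:ℝ)^2 / (Cα ^ (1/p) * (2:ℝ) ^ ((l:ℝ)/p)) := by
      rw [Real.inv_rpow hCα.le, neg_div, Real.rpow_neg two_pos.le]
      field_simp
    rw [heq, le_div_iff₀ (by positivity), one_mul]
    exact hNbig
  -- separation
  set D : ℝ := (Cα * (2:ℝ) ^ ((l:ℝ) - 1)) ^ (1/p) with hD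
  have hDpos : 0 < D := Real.rpow_pos_of_pos (by positivity) _
  have hsep : ∀ m ∈ S, ∀ n ∈ S, m < n → D ≤ (n : ℝ) - (m : ℝ) := by
    intro m hm n hn hmn
    obtain ⟨hm1, hmM, hmd⟩ := hm
    obtain ⟨hn1, hnM, hnd⟩ := hn
    set k := n - m with hk
    have hk1 : 1 ≤ k := by omega
    have hkc : (k : ℝ) = (n : ℝ) - (m : ℝ) := by
      rw [hk, Nat.cast_sub hmn.le]
    have hdk : distT ((k:ℝ) * α) ≤ 2 * (2:ℝ) ^ (-(l:ℝ)) := by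
      have : (k:ℝ) * α = (n:ℝ) * α - (m:ℝ) * α := by rw [hkc]; ring
      rw [this]
      calc distT ((n:ℝ)*α - (m:ℝ)*α) ≤ distT ((n:ℝ)*α) + distT ((m:ℝ)*α) := distT_sub_le _ _
      _ ≤ (2:ℝ) ^ (-(l:ℝ)) + (2:ℝ) ^ (-(l:ℝ)) := add_le_add hnd hmd
      _ = 2 * (2:ℝ) ^ (-(l:ℝ)) := by ring
    have hkp : (0:ℝ) < (k : ℝ) ^ p := Real.rpow_pos_of_pos (by exact_mod_cast hk1) _
    have h1 : Cα / (k : ℝ) ^ p ≤ 2 * (2:ℝ) ^ (-(l:ℝ)) := (hdio k hk1).trans hdk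
    have h2 : Cα * (2:ℝ) ^ ((l:ℝ) - 1) ≤ (k : ℝ) ^ p := by
      rw [div_le_iff₀ hkp] at h1
      have h2e : (2 * (2:ℝ) ^ (-(l:ℝ))) * (2:ℝ) ^ ((l:ℝ) - 1) = 1 := by
        have e : (2:ℝ) ^ (-(l:ℝ)) * (2:ℝ) ^ ((l:ℝ) - 1) = (2:ℝ) ^ (-1:ℝ) := by
          rw [← Real.rpow_add two_pos, show -(l:ℝ) + ((l:ℝ) - 1) = (-1:ℝ) by ring]
        calc (2 * (2:ℝ) ^ (-(l:ℝ))) * (2:ℝ) ^ ((l:ℝ) - 1)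
            = 2 * ((2:ℝ) ^ (-(l:ℝ)) * (2:ℝ) ^ ((l:ℝ) - 1)) := by ring
        _ = 2 * (2:ℝ) ^ (-1:ℝ) := by rw [e]
        _ = 1 := by rw [Real.rpow_neg_one]; norm_num
      calc Cα * (2:ℝ) ^ ((l:ℝ) - 1) ≤ ((2 * (2:ℝ) ^ (-(l:ℝ))) * (k:ℝ) ^ p) * (2:ℝ) ^ ((l:ℝ) - 1) := by
            gcongr
      _ = (k:ℝ) ^ p * ((2 * (2:ℝ) ^ (-(l:ℝ))) * (2:ℝ) ^ ((l:ℝ) - 1)) := by ring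
      _ = (k:ℝ) ^ p := by rw [h2e, mul_one]
    calc D ≤ ((k:ℝ) ^ p) ^ (1/p) := Real.rpow_le_rpow (by positivity) h2 (by positivity)
    _ = (k : ℝ) := by
        rw [← Real.rpow_mul (Nat.cast_nonneg k), mul_one_div, div_self hp0.ne', Real.rpow_one]
    _ = (n : ℝ) - (m : ℝ) := hkc
  have hcount := count_sep M D hDpos S (fun n hn => ⟨hn.1, hn.2.1⟩) hsep
  have hDinv : 1 / D = (2 / Cα) ^ (1/p) * (2:ℝ) ^ (-(l:ℝ)/p) := by
    have e1 : Cα * (2:ℝ) ^ ((l:ℝ) - 1) = ((2:ℝ) / Cα * (2:ℝ) ^ (-(l:ℝ)))⁻¹ := by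
      rw [Real.rpow_sub two_pos, Real.rpow_one, Real.rpow_neg two_pos.le]
      have h2l : (0:ℝ) < (2:ℝ) ^ ((l:ℝ)) := Real.rpow_pos_of_pos two_pos _
      field_simp
    rw [hD, e1, Real.inv_rpow (by positivity), one_div, inv_inv,
      Real.mul_rpow (by positivity) (by positivity), ← Real.rpow_mul two_pos.le, mul_one_div]
  calc (S.ncard : ℝ) ≤ (M : ℝ) / D + 1 := hcount
  _ ≤ (N:ℝ)^2 * (1 / D) + Cα⁻¹ ^ (1/p) * (N:ℝ)^2 * (2:ℝ) ^ (-(l:ℝ)/p) := by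
      rw [div_eq_mul_one_div]
      gcongr
  _ = ((2 / Cα) ^ (1 / p) + Cα⁻¹ ^ (1 / p)) * (N:ℝ)^2 * (2:ℝ) ^ (-(l:ℝ)/p) := by
      rw [hDinv]; ring
end

section
/- Let 1 ≤ m ≤ m' be integers and let {b₁,…,b_m, b_{m+1},…,b_{m'}} be a basis of ℝ^{m'} such that each of the vectors b_{m+1},…,b_{m'} has all coordinates in {0, 1, −1}. Fix a vector τ ∈ ℝ^{m'}. Then there exists a constant C > 0 depending only on m' such that for every integer N ≥ 1, the set { (a₁,…,a_m) ∈ ℝ^m : there exist a_{m+1},…,a_{m'} ∈ ℝ with τ + Σ_{i=1}^{m'} a_i·b_i ∈ {1,…,N}^{m'} } is finite with cardinality at most C·N^m. -/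
open scoped BigOperators

/-- The set `{1,…,N}^{m'} ⊆ ℝ^{m'}` of points all of whose coordinates are integers
between `1` and `N`. -/
def latticeBox (k N : ℕ) : Set (Fin k → ℝ) :=
  {x | ∀ i, ∃ m : ℕ, 1 ≤ m ∧ m ≤ N ∧ x i = (m : ℝ)}

/-! For each `a` in the set `A` to be counted, pick one lattice point
`x_a = τ + Σ aᵢ bᵢ + Σ dⱼ b_{m+j}` of the box and translate it by `Σ tⱼ b_{m+j}` for every
`t ∈ {1,…,N}^{m'-m}`. Linear independence of the `bᵢ` makes these translates distinct for distinct
`(a, t)`, and because the `b_{m+j}` have entries in `{0, ±1}` they are integer points of a cube of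
side `(2(m'-m)+1)N`. Hence `#A · N^{m'-m} ≤ ((2(m'-m)+1)N)^{m'}`, that is
`#A ≤ (2m'+1)^{m'} N^m`. -/

theorem LinearIndependent.eq_and_eq_of_sum_add_sum_eq {R E κ ι : Type*} [Semiring R]
    [AddCommMonoid E] [Module R E] [Fintype κ] [Fintype ι] {u : κ → E} {v : ι → E}
    (huv : LinearIndependent R (Sum.elim u v)) {a a' : κ → R} {d d' : ι → R}
    (h : ∑ i, a i • u i + ∑ j, d j • v j = ∑ i, a' i • u i + ∑ j, d' j • v j) :
    a = a' ∧ d = d' := by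
  have hc := Fintype.linearIndependent_iffₛ.mp huv (Sum.elim a d) (Sum.elim a' d')
    (by simpa only [Fintype.sum_sum_type, Sum.elim_inl, Sum.elim_inr] using h)
  exact ⟨funext fun i => hc (.inl i), funext fun j => hc (.inr j)⟩

theorem LinearIndependent.sum_elim_comp_castAdd_natAdd {R E : Type*} [Semiring R] [AddCommMonoid E]
    [Module R E] {m k : ℕ} {b : Fin (m + k) → E} (hb : LinearIndependent R b) :
    LinearIndependent R (Sum.elim (b ∘ Fin.castAdd k) (b ∘ Fin.natAdd m)) := by
  convert hb.comp _ finSumFinEquiv.injective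
  ext (i | j) <;> simp

section CoordsAlong

variable {κ ι E : Type*} [Fintype κ] [Fintype ι] [AddCommGroup E] [Module ℝ E]

def coordsAlong (u : κ → E) (v : ι → E) (τ : E) (X : Set E) : Set (κ → ℝ) :=
  {a | ∃ d : ι → ℝ, τ + ∑ i, a i • u i + ∑ j, d j • v j ∈ X}

theorem finite_coordsAlong_and_ncard_mul_le {u : κ → E} {v : ι → E}
    (huv : LinearIndependent ℝ (Sum.elim u v)) (τ : E) {X Y : Set E} {T : Set (ι → ℝ)}
    (hY : Y.Finite) (hT : T.Nonempty) (hXY : ∀ x ∈ X, ∀ t ∈ T, x + ∑ j, t j • v j ∈ Y) :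
    (coordsAlong u v τ X).Finite ∧ (coordsAlong u v τ X).ncard * T.ncard ≤ Y.ncard := by
  choose! d hd using fun a (ha : a ∈ coordsAlong u v τ X) => ha
  set f : (κ → ℝ) × (ι → ℝ) → E := fun p => τ + ∑ i, p.1 i • u i + ∑ j, (d p.1 + p.2) j • v j
  have hmaps : Set.MapsTo f (coordsAlong u v τ X ×ˢ T) Y := by
    rintro ⟨a, t⟩ ⟨ha, ht⟩
    convert hXY _ (hd a ha) t ht using 1
    simp only [f, Pi.add_apply, add_smul, Finset.sum_add_distrib, add_assoc]
  have hinj : Set.InjOn f (coordsAlong u v τ X ×ˢ T) := by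
    rintro ⟨a, t⟩ - ⟨a', t'⟩ - h
    obtain ⟨rfl, hdt⟩ := huv.eq_and_eq_of_sum_add_sum_eq (add_left_cancel (a := τ) (by
      simpa only [f, add_assoc] using h))
    rw [Prod.mk.injEq]
    exact ⟨rfl, add_left_cancel hdt⟩
  have hfin := Set.Finite.of_injOn hmaps hinj hY
  refine ⟨?_, ?_⟩
  · simpa only [Set.fst_image_prod _ hT] using hfin.image Prod.fst
  · rw [← Set.ncard_prod]
    exact Set.ncard_le_ncard_of_injOn f hmaps hinj hY

end CoordsAlong

theorem setOf_castLE_eq_coordsAlong {E : Type*} [AddCommGroup E] [Module ℝ E] {m k : ℕ}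
    (h : m ≤ m + k) (b : Fin (m + k) → E) (τ : E) (X : Set E) :
    {a : Fin m → ℝ | ∃ c : Fin (m + k) → ℝ, (∀ i, c (Fin.castLE h i) = a i) ∧
      τ + ∑ i, c i • b i ∈ X} = coordsAlong (b ∘ Fin.castAdd k) (b ∘ Fin.natAdd m) τ X := by
  ext a
  simp only [coordsAlong, Set.mem_ofPred_eq, Fin.sum_univ_add, Function.comp_apply, ← add_assoc]
  constructor
  · rintro ⟨c, hca, hc⟩
    have hca' : ∀ i, c (Fin.castAdd k i) = a i := hca
    exact ⟨c ∘ Fin.natAdd m, by simpa only [hca', Function.comp_apply] using hc⟩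
  · rintro ⟨d, hd⟩
    exact ⟨Fin.append a d, Fin.append_left a d, by simpa only [Fin.append_left, Fin.append_right]⟩

theorem latticeBox_eq_piFinset (k N : ℕ) :
    latticeBox k N =
      Fintype.piFinset fun _ : Fin k => (Finset.Icc 1 N).image (Nat.cast : ℕ → ℝ) := by
  ext x
  simp [latticeBox, and_assoc, eq_comm]

theorem ncard_latticeBox (k N : ℕ) : (latticeBox k N).ncard = N ^ k := by
  rw [latticeBox_eq_piFinset, Set.ncard_coe_finset, Fintype.card_piFinset,
    Finset.card_image_of_injective _ Nat.cast_injective]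
  simp

theorem exists_int_eq_sum_smul_apply {k n N : ℕ} {v : Fin k → Fin n → ℝ}
    (hv : ∀ i j, v i j = 0 ∨ v i j = 1 ∨ v i j = -1) {t : Fin k → ℝ} (ht : t ∈ latticeBox k N)
    (j : Fin n) : ∃ z : ℤ, |z| ≤ k * N ∧ (∑ i, t i • v i) j = z := by
  have hterm : ∀ i, ∃ z : ℤ, |z| ≤ N ∧ t i * v i j = z := by
    intro i
    obtain ⟨p, -, hpN, hp⟩ := ht i
    rcases hv i j with h | h | h
    · exact ⟨0, by positivity, by simp [h]⟩
    · exact ⟨p, by simpa using hpN, by simp [h, hp]⟩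
    · exact ⟨-p, by simpa using hpN, by simp [h, hp]⟩
  choose z hzN hz using hterm
  refine ⟨∑ i, z i, ?_, by simp [Finset.sum_apply, hz]⟩
  calc |∑ i, z i| ≤ ∑ i, |z i| := Finset.abs_sum_le_sum_abs _ _
    _ ≤ ∑ _i : Fin k, (N : ℤ) := Finset.sum_le_sum fun i _ => hzN i
    _ = k * N := by simp

theorem add_sum_smul_mem_piFinset_Icc {k n N : ℕ} {v : Fin k → Fin n → ℝ}
    (hv : ∀ i j, v i j = 0 ∨ v i j = 1 ∨ v i j = -1) {x : Fin n → ℝ} (hx : x ∈ latticeBox n N)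
    {t : Fin k → ℝ} (ht : t ∈ latticeBox k N) :
    x + ∑ i, t i • v i ∈ Fintype.piFinset fun _ : Fin n =>
      (Finset.Icc (1 - k * N : ℤ) (N + k * N)).image (Int.cast : ℤ → ℝ) := by
  rw [Fintype.mem_piFinset]
  intro j
  simp only [Finset.mem_image, Finset.mem_Icc]
  obtain ⟨p, hp1, hpN, hp⟩ := hx j
  obtain ⟨z, hz, hzj⟩ := exists_int_eq_sum_smul_apply hv ht j
  refine ⟨p + z, ?_, by simp [hp, hzj]⟩
  have := abs_le.mp hz
  omega

theorem finite_coordsAlong_latticeBox_and_ncard_mul_le {κ : Type*} [Fintype κ] {n k N : ℕ}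
    {u : κ → Fin n → ℝ} {v : Fin k → Fin n → ℝ} (huv : LinearIndependent ℝ (Sum.elim u v))
    (hv : ∀ i j, v i j = 0 ∨ v i j = 1 ∨ v i j = -1) (τ : Fin n → ℝ) (hN : 1 ≤ N) :
    (coordsAlong u v τ (latticeBox n N)).Finite ∧
      (coordsAlong u v τ (latticeBox n N)).ncard * N ^ k ≤ ((2 * k + 1) * N) ^ n := by
  have hT : (latticeBox k N).Nonempty := ⟨fun _ => 1, fun _ => ⟨1, le_rfl, hN, Nat.cast_one.symm⟩⟩
  obtain ⟨hfin, hcard⟩ := finite_coordsAlong_and_ncard_mul_le huv τ (Finset.finite_toSet _) hT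
    fun x hx t ht => add_sum_smul_mem_piFinset_Icc hv hx ht
  have hside : (N + k * N + 1 - (1 - k * N) : ℤ).toNat = (2 * k + 1) * N := by
    rw [show (N + k * N + 1 - (1 - k * N) : ℤ) = ((2 * k + 1) * N : ℕ) by push_cast; ring,
      Int.toNat_natCast]
  refine ⟨hfin, ?_⟩
  rwa [ncard_latticeBox, Set.ncard_coe_finset, Fintype.card_piFinset, Finset.prod_const,
    Finset.card_image_of_injective _ Int.cast_injective, Int.card_Icc, hside, Finset.card_univ,
    Fintype.card_fin] at hcard

theorem statement15_general (m' : ℕ) :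
    ∃ C : ℝ, 0 < C ∧
      ∀ (m : ℕ) (hm1 : 1 ≤ m) (hmm' : m ≤ m')
        (b : Fin m' → (Fin m' → ℝ)),
        LinearIndependent ℝ b →
        Submodule.span ℝ (Set.range b) = ⊤ →
        (∀ i : Fin m', m ≤ (i : ℕ) → ∀ j : Fin m',
          b i j = 0 ∨ b i j = 1 ∨ b i j = -1) →
        ∀ (τ : Fin m' → ℝ) (N : ℕ), 1 ≤ N →
          ({a : Fin m → ℝ | ∃ c : Fin m' → ℝ,
              (∀ i : Fin m, c (Fin.castLE hmm' i) = a i) ∧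
              (τ + ∑ i : Fin m', c i • b i) ∈ latticeBox m' N}.Finite ∧
            ({a : Fin m → ℝ | ∃ c : Fin m' → ℝ,
              (∀ i : Fin m, c (Fin.castLE hmm' i) = a i) ∧
              (τ + ∑ i : Fin m', c i • b i) ∈ latticeBox m' N}.ncard : ℝ)
              ≤ C * (N : ℝ) ^ m) := by
  refine ⟨(2 * m' + 1) ^ m', by positivity, ?_⟩
  intro m _ hmm' b hb _ hb01 τ N hN
  obtain ⟨k, rfl⟩ := Nat.exists_eq_add_of_le hmm'
  rw [setOf_castLE_eq_coordsAlong]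
  obtain ⟨hfin, hcard⟩ := finite_coordsAlong_latticeBox_and_ncard_mul_le
    hb.sum_elim_comp_castAdd_natAdd (fun i => hb01 _ (Nat.le_add_right m i)) τ hN
  refine ⟨hfin, ?_⟩
  have hle := Nat.le_of_mul_le_mul_right (hcard.trans_eq (by rw [mul_pow, pow_add N, mul_assoc] :
    ((2 * k + 1) * N) ^ (m + k) = (2 * k + 1) ^ (m + k) * N ^ m * N ^ k)) (by positivity)
  calc _ ≤ (((2 * k + 1) ^ (m + k) * N ^ m : ℕ) : ℝ) := by exact_mod_cast hle
    _ ≤ _ := by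
      push_cast
      gcongr
      exact le_add_of_nonneg_left m.cast_nonneg

theorem statement15 (m' : ℕ) (hm' : 1 ≤ m') :
    ∃ C : ℝ, 0 < C ∧
      ∀ (m : ℕ) (hm1 : 1 ≤ m) (hmm' : m ≤ m')
        (b : Fin m' → (Fin m' → ℝ)),
        LinearIndependent ℝ b →
        Submodule.span ℝ (Set.range b) = ⊤ →
        (∀ i : Fin m', m ≤ (i : ℕ) → ∀ j : Fin m',
          b i j = 0 ∨ b i j = 1 ∨ b i j = -1) →
        ∀ (τ : Fin m' → ℝ) (N : ℕ), 1 ≤ N →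
          ({a : Fin m → ℝ | ∃ c : Fin m' → ℝ,
              (∀ i : Fin m, c (Fin.castLE hmm' i) = a i) ∧
              (τ + ∑ i : Fin m', c i • b i) ∈ latticeBox m' N}.Finite ∧
            ({a : Fin m → ℝ | ∃ c : Fin m' → ℝ,
              (∀ i : Fin m, c (Fin.castLE hmm' i) = a i) ∧
              (τ + ∑ i : Fin m', c i • b i) ∈ latticeBox m' N}.ncard : ℝ)
              ≤ C * (N : ℝ) ^ m) :=
  statement15_general m'
end

section
/- Let E and V be nonempty finite types and let s, t : E → V define a finite directed multigraph (each e ∈ E is an edge from s(e) to t(e)). Assume the underlying undirected graph is connected, i.e., the reflexive–transitive closure of the symmetric relation R, where R(a,b) holds iff there exists e ∈ E with (s(e) = a and t(e) = b) or (s(e) = b and t(e) = a), relates every pair of vertices. Then the ℝ-vector space 𝒞 := { j : E → ℝ : for every v ∈ V, Σ_{e : t(e) = v} j(e) = Σ_{e : s(e) = v} j(e) } of solutions of Kirchhoff's current law has dimension |E| − |V| + 1. -/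
open scoped BigOperators

/-- The space of solutions `j : E → ℝ` of Kirchhoff's current law for the directed
multigraph with edges `E`, vertices `V`, and source/target maps `s, t`: at every
vertex, the total weight of incoming edges equals the total weight of outgoing edges. -/
def kirchhoffSpace (E V : Type) [Fintype E] [DecidableEq V] (s t : E → V) :
    Submodule ℝ (E → ℝ) where
  carrier := {j | ∀ v : V,
    ∑ e ∈ Finset.univ.filter (fun e => t e = v), j e =
      ∑ e ∈ Finset.univ.filter (fun e => s e = v), j e}
  add_mem' := by
    intro a b ha hb v
    simp only [Set.mem_setOf_eq] at ha hb
    simp [Finset.sum_add_distrib, ha v, hb v]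
  zero_mem' := by intro v; simp
  smul_mem' := by
    intro c a ha v
    simp only [Set.mem_setOf_eq] at ha
    simp [← Finset.mul_sum, ha v]

/-- Boundary map for the multigraph. -/
noncomputable def boundaryMap (E V : Type) [Fintype E] [DecidableEq V] (s t : E → V) :
    (E → ℝ) →ₗ[ℝ] (V → ℝ) where
  toFun j := fun v =>
    ∑ e ∈ Finset.univ.filter (fun e => t e = v), j e -
      ∑ e ∈ Finset.univ.filter (fun e => s e = v), j e
  map_add' a b := by
    funext v
    simp [Finset.sum_add_distrib]
    ring
  map_smul' c a := by
    funext v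
    simp [← Finset.mul_sum, mul_sub]

theorem kirchhoff_eq_ker (E V : Type) [Fintype E] [DecidableEq V] (s t : E → V) :
    kirchhoffSpace E V s t = LinearMap.ker (boundaryMap E V s t) := by
  ext j
  simp only [kirchhoffSpace, boundaryMap, Submodule.mem_mk, AddSubmonoid.mem_mk,
    AddSubsemigroup.mem_mk, Set.mem_setOf_eq, LinearMap.mem_ker, LinearMap.coe_mk,
    AddHom.coe_mk, funext_iff, Pi.zero_apply, sub_eq_zero]

/-- The sum functional. -/
noncomputable def sumFun (V : Type) [Fintype V] : (V → ℝ) →ₗ[ℝ] ℝ where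
  toFun f := ∑ v, f v
  map_add' a b := by simp [Finset.sum_add_distrib]
  map_smul' c a := by simp [Finset.mul_sum]

theorem statement16 (E V : Type) [Fintype E] [Fintype V] [Nonempty E] [Nonempty V]
    [DecidableEq V] (s t : E → V)
    (hconn : ∀ a b : V, Relation.ReflTransGen
      (fun a b => ∃ e : E, (s e = a ∧ t e = b) ∨ (s e = b ∧ t e = a)) a b) :
    Module.finrank ℝ (kirchhoffSpace E V s t) + Fintype.card V
      = Fintype.card E + 1 := by
  classical
  set D := boundaryMap E V s t with hD
  -- D applied to an edge indicator
  have hedge : ∀ e : E, D (fun e' => if e' = e then (1:ℝ) else 0)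
      = Pi.single (t e) 1 - Pi.single (s e) 1 := by
    intro e
    funext v
    simp only [hD, boundaryMap, LinearMap.coe_mk, AddHom.coe_mk, Pi.sub_apply]
    rw [Finset.sum_ite_eq', Finset.sum_ite_eq']
    simp [Pi.single_apply, Finset.mem_filter, eq_comm]
  -- range D = ker of sum functional
  have hrange : LinearMap.range D = LinearMap.ker (sumFun V) := by
    apply le_antisymm
    · rintro f ⟨j, rfl⟩
      simp only [LinearMap.mem_ker, sumFun, LinearMap.coe_mk, AddHom.coe_mk,
        hD, boundaryMap]
      rw [Finset.sum_sub_distrib]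
      rw [Finset.sum_fiberwise_eq_sum_filter Finset.univ Finset.univ t j,
        Finset.sum_fiberwise_eq_sum_filter Finset.univ Finset.univ s j]
      · simp
    · intro f hf
      obtain ⟨v0⟩ := ‹Nonempty V›
      have hdelta : ∀ a b : V,
          (Pi.single b 1 - Pi.single a 1 : V → ℝ) ∈ LinearMap.range D := by
        intro a b
        induction hconn a b with
        | refl => simp
        | tail _ hbc ih =>
          rename_i x c _
          obtain ⟨e, he⟩ := hbc
          have hx : (Pi.single c 1 - Pi.single x 1 : V → ℝ) ∈ LinearMap.range D := by
            rcases he with ⟨hs, ht⟩ | ⟨hs, ht⟩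
            · exact ⟨_, by rw [hedge e, hs, ht]⟩
            · refine ⟨-(fun e' => if e' = e then (1:ℝ) else 0), ?_⟩
              rw [map_neg, hedge e, hs, ht]; abel
          have := Submodule.add_mem _ ih hx
          convert this using 1
          abel
      have : f = ∑ b, f b • (Pi.single b 1 - Pi.single v0 1 : V → ℝ) := by
        funext v
        have hsum : ∑ b, f b = 0 := hf
        simp only [Finset.sum_apply, Pi.smul_apply, Pi.sub_apply, Pi.single_apply,
          smul_eq_mul, mul_sub, Finset.sum_sub_distrib, mul_ite, mul_one, mul_zero]
        rw [Finset.sum_ite_eq Finset.univ v f]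
        by_cases hv : v = v0 <;> simp [hv, hsum]
      rw [this]
      exact Submodule.sum_mem _ fun b _ => Submodule.smul_mem _ _ (hdelta v0 b)
  -- rank of range D
  have hsurj : LinearMap.range (sumFun V) = ⊤ := by
    rw [LinearMap.range_eq_top]
    intro r
    obtain ⟨v0⟩ := ‹Nonempty V›
    exact ⟨Pi.single v0 r, by simp [sumFun, Pi.single_apply]⟩
  have h1 : Module.finrank ℝ (LinearMap.range (sumFun V))
      + Module.finrank ℝ (LinearMap.ker (sumFun V)) = Fintype.card V := by
    rw [LinearMap.finrank_range_add_finrank_ker]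
    simp [Module.finrank_fintype_fun_eq_card]
  rw [hsurj] at h1
  have h1' : Module.finrank ℝ (LinearMap.ker (sumFun V)) + 1 = Fintype.card V := by
    rw [finrank_top, Module.finrank_self] at h1
    omega
  have h2 : Module.finrank ℝ (LinearMap.range D)
      + Module.finrank ℝ (LinearMap.ker D) = Fintype.card E := by
    rw [LinearMap.finrank_range_add_finrank_ker]
    simp [Module.finrank_fintype_fun_eq_card]
  rw [kirchhoff_eq_ker, ← hD, ← h1', hrange] at *
  omega
end

section
/- Let E and V be nonempty finite types and let s, t : E → V define a finite directed multigraph whose underlying undirected graph is connected (the reflexive–transitive closure of the symmetric relation R, where R(a,b) holds iff there exists e ∈ E with (s(e) = a and t(e) = b) or (s(e) = b and t(e) = a), relates every pair of vertices). Then there exists a constant C > 0 (depending only on the graph) such that for every integer M ≥ 1, the number of functions j : E → {1,…,M} satisfying Kirchhoff's current law at every vertex (Σ_{e : t(e) = v} j(e) = Σ_{e : s(e) = v} j(e) for all v ∈ V) is at most C·M^(|E| − |V| + 1). -/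
open scoped BigOperators


open Finset Module

-- aux lemma: coordinate selection
lemma exists_sep_coords (K : Type*) [Field K] (ι : Type) [Fintype ι] [DecidableEq ι] :
    ∀ (n : ℕ) (W : Submodule K (ι → K)), Module.finrank K W = n →
      ∃ S : Finset ι, S.card ≤ n ∧ ∀ x ∈ W, (∀ i ∈ S, x i = 0) → x = 0 := by
  intro n
  induction n with
  | zero =>
    intro W hW
    refine ⟨∅, le_rfl, fun x hx _ => ?_⟩
    have : W = ⊥ := Submodule.finrank_eq_zero.mp hW
    simpa [this] using hx
  | succ n ih =>
    intro W hW
    have hW0 : W ≠ ⊥ := by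
      intro h
      rw [h, finrank_bot] at hW
      omega
    obtain ⟨x, hxW, hx0⟩ := Submodule.exists_mem_ne_zero_of_ne_bot hW0
    obtain ⟨i, hi⟩ : ∃ i, x i ≠ 0 := by
      by_contra h
      push_neg at h
      exact hx0 (funext h)
    set f : W →ₗ[K] K := (LinearMap.proj i).comp W.subtype with hf
    have hfx : f ⟨x, hxW⟩ = x i := rfl
    have hfne : f ≠ 0 := by
      intro h
      rw [h] at hfx
      exact hi (by simpa using hfx.symm)
    have hrange : LinearMap.range f = ⊤ := by
      exact LinearMap.range_eq_top.mpr (LinearMap.surjective_of_ne_zero hfne)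
    have hker : Module.finrank K (LinearMap.ker f) = n := by
      have h1 := LinearMap.finrank_range_add_finrank_ker f
      rw [hrange] at h1
      rw [finrank_top, Module.finrank_self, hW] at h1
      omega
    have hW' : Module.finrank K ((LinearMap.ker f).map W.subtype) = n := by
      rw [Submodule.finrank_map_subtype_eq]
      exact hker
    obtain ⟨S', hS'card, hS'⟩ := ih _ hW'
    refine ⟨insert i S', ?_, ?_⟩
    · calc (insert i S').card ≤ S'.card + 1 := Finset.card_insert_le _ _
        _ ≤ n + 1 := by omega
    · intro y hyW hy
      have hyi : y i = 0 := hy i (Finset.mem_insert_self i S')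
      have hymem : y ∈ (LinearMap.ker f).map W.subtype := by
        refine ⟨⟨y, hyW⟩, ?_, rfl⟩
        simpa [hf] using hyi
      exact hS' y hymem (fun j hj => hy j (Finset.mem_insert_of_mem hj))

theorem statement17 (E V : Type) [Fintype E] [Fintype V] [Nonempty E] [Nonempty V]
    [DecidableEq V] (s t : E → V)
    (hconn : ∀ a b : V, Relation.ReflTransGen
      (fun a b => ∃ e : E, (s e = a ∧ t e = b) ∨ (s e = b ∧ t e = a)) a b) :
    ∃ C : ℝ, 0 < C ∧ ∀ M : ℕ, 1 ≤ M →
      ({j : E → ℕ | (∀ e : E, 1 ≤ j e ∧ j e ≤ M) ∧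
          ∀ v : V, ∑ e ∈ Finset.univ.filter (fun e => t e = v), j e =
            ∑ e ∈ Finset.univ.filter (fun e => s e = v), j e}.ncard : ℝ)
        ≤ C * (M : ℝ) ^ ((Fintype.card E : ℤ) - (Fintype.card V : ℤ) + 1) := by
  classical
  set A : Matrix V E ℝ :=
    Matrix.of (fun v e => (if t e = v then (1:ℝ) else 0) - (if s e = v then 1 else 0)) with hA
  set W : Submodule ℝ (E → ℝ) := LinearMap.ker A.mulVecLin with hWdef
  -- the kernel of the transpose consists of constant functions
  have hkerT : LinearMap.ker (A.transpose.mulVecLin) ≤ Submodule.span ℝ {(fun _ => (1:ℝ) : V → ℝ)} := by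
    intro f hf
    have hfe : ∀ e, f (t e) = f (s e) := by
      intro e
      have h := congrFun (LinearMap.mem_ker.mp hf) e
      simp only [Matrix.mulVecLin_apply, Matrix.mulVec, dotProduct, Matrix.transpose_apply,
        hA, Matrix.of_apply, sub_mul, Finset.sum_sub_distrib, ite_mul, one_mul, zero_mul,
        Finset.sum_ite_eq, Finset.mem_univ, if_true, Pi.zero_apply] at h
      linarith [h]
    have key : ∀ a b : V, f a = f b := by
      intro a b
      induction hconn a b with
      | refl => rfl
      | tail _ hr ih =>
        obtain ⟨e, he⟩ := hr
        rcases he with ⟨h1, h2⟩ | ⟨h1, h2⟩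
        · rw [ih, ← h1, ← h2, hfe e]
        · rw [ih, ← h1, ← h2, hfe e]
    obtain ⟨v0⟩ := (inferInstance : Nonempty V)
    rw [Submodule.mem_span_singleton]
    exact ⟨f v0, by funext v; simp [key v0 v]⟩
  have hker1 : Module.finrank ℝ (LinearMap.ker (A.transpose.mulVecLin)) ≤ 1 := by
    refine le_trans (Submodule.finrank_mono hkerT) ?_
    refine le_trans (finrank_span_le_card _) ?_
    simp
  have h2 : A.transpose.rank + Module.finrank ℝ (LinearMap.ker (A.transpose.mulVecLin)) = Fintype.card V := by
    have := LinearMap.finrank_range_add_finrank_ker (A.transpose.mulVecLin)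
    rwa [Module.finrank_fintype_fun_eq_card] at this
  have h3 : A.rank + Module.finrank ℝ W = Fintype.card E := by
    have := LinearMap.finrank_range_add_finrank_ker (A.mulVecLin)
    rwa [Module.finrank_fintype_fun_eq_card] at this
  have h4 : A.transpose.rank = A.rank := Matrix.rank_transpose A
  -- select separating coordinates
  obtain ⟨S, hScard, hSsep⟩ := exists_sep_coords ℝ E (Module.finrank ℝ W) W rfl
  have hSle : (S.card : ℤ) ≤ (Fintype.card E : ℤ) - (Fintype.card V : ℤ) + 1 := by
    have : S.card ≤ Module.finrank ℝ W := hScard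
    omega
  -- cast of a Kirchhoff solution lies in W
  have hcast : ∀ j : E → ℕ,
      (∀ v : V, ∑ e ∈ Finset.univ.filter (fun e => t e = v), j e =
        ∑ e ∈ Finset.univ.filter (fun e => s e = v), j e) →
      (fun e => (j e : ℝ)) ∈ W := by
    intro j hj
    rw [hWdef, LinearMap.mem_ker]
    funext v
    have h0 : ∑ e ∈ Finset.univ.filter (fun e => t e = v), (j e : ℝ) =
        ∑ e ∈ Finset.univ.filter (fun e => s e = v), (j e : ℝ) := by
      exact_mod_cast congrArg (fun n : ℕ => (n : ℝ)) (hj v)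
    rw [Finset.sum_filter, Finset.sum_filter] at h0
    simp only [Matrix.mulVecLin_apply, Matrix.mulVec, dotProduct, hA, Matrix.of_apply,
      sub_mul, Finset.sum_sub_distrib, ite_mul, one_mul, zero_mul, Pi.zero_apply]
    rw [h0, sub_self]
  refine ⟨1, one_pos, ?_⟩
  intro M hM
  set T : Set (E → ℕ) := {j : E → ℕ | (∀ e : E, 1 ≤ j e ∧ j e ≤ M) ∧
      ∀ v : V, ∑ e ∈ Finset.univ.filter (fun e => t e = v), j e =
        ∑ e ∈ Finset.univ.filter (fun e => s e = v), j e} with hT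
  -- injection into S → Fin M
  have hemb : ∃ g : T → (↥S → Fin M), Function.Injective g := by
    refine ⟨fun j e => ⟨j.1 e.1 - 1, ?_⟩, ?_⟩
    · have h1 := (j.2.1 e.1).1
      have h2 := (j.2.1 e.1).2
      omega
    · intro j1 j2 h
      have hSeq : ∀ e ∈ S, j1.1 e = j2.1 e := by
        intro e he
        have := congrFun h ⟨e, he⟩
        simp only [Fin.mk.injEq] at this
        have h1 := (j1.2.1 e).1
        have h2 := (j2.2.1 e).1
        omega
      set x : E → ℝ := (fun e => (j1.1 e : ℝ)) - (fun e => (j2.1 e : ℝ)) with hx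
      have hxW : x ∈ W := sub_mem (hcast _ j1.2.2) (hcast _ j2.2.2)
      have hx0 : x = 0 := by
        refine hSsep x hxW ?_
        intro i hi
        simp [hx, hSeq i hi]
      ext e
      have := congrFun hx0 e
      simp only [hx, Pi.sub_apply, Pi.zero_apply, sub_eq_zero] at this
      exact_mod_cast this
  obtain ⟨g, hg⟩ := hemb
  have hcard : T.ncard ≤ M ^ S.card := by
    rw [← Nat.card_coe_set_eq]
    calc Nat.card T ≤ Nat.card (↥S → Fin M) := Nat.card_le_card_of_injective g hg
      _ = M ^ S.card := by simp [Nat.card_eq_fintype_card]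
  have hNnn : 0 ≤ (Fintype.card E : ℤ) - (Fintype.card V : ℤ) + 1 := le_trans (by positivity) hSle
  calc (T.ncard : ℝ) ≤ (M : ℝ) ^ S.card := by exact_mod_cast hcard
    _ ≤ (M : ℝ) ^ ((Fintype.card E : ℤ) - (Fintype.card V : ℤ) + 1).toNat := by
        apply pow_le_pow_right₀ (by exact_mod_cast hM)
        omega
    _ = 1 * (M : ℝ) ^ ((Fintype.card E : ℤ) - (Fintype.card V : ℤ) + 1) := by
        rw [one_mul, ← zpow_natCast, Int.toNat_of_nonneg hNnn]
end

section
/- Let G be a simple graph. Let C be a cycle in G (a closed walk that is a simple cycle) whose edge set contains two distinct edges e and e', and suppose there is a cycle C' in G whose edge set contains e' but not e. Then there exists a cycle C̃ in G whose edge set contains e, does not contain e', and is contained in the union of the edge sets of C and C'. -/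
/-!
Work in the graph `K` formed by the edges of `C` and `C'`. The edge `e = s(a, b)` lies on the
cycle `C`, so it is not a bridge of `K` and `a`, `b` are joined in `K - e`. Since `e ∉ C'`, the
edge `e'` lies on the cycle `C'` of `K - e`, so it is not a bridge there either and `a`, `b` stay
joined in `K - e - e'`. Closing such a path with `e` gives a cycle through `e` avoiding `e'`.
-/

namespace SimpleGraph

variable {V : Type*} {G H : SimpleGraph V}

lemma Walk.IsCycle.not_isBridge {u : V} {p : G.Walk u u} (hp : p.IsCycle) {e : Sym2 V}
    (he : e ∈ p.edges) (hH : ∀ f ∈ p.edges, f ∈ H.edgeSet) : ¬ H.IsBridge e :=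
  fun hb ↦ hb.notMem_edges_of_isCycle (hp.transfer hH) (by rwa [Walk.edges_transfer])

lemma Reachable.deleteEdges_of_not_isBridge {e : Sym2 V} (he : ¬ G.IsBridge e) {u v : V}
    (huv : G.Reachable u v) : (G.deleteEdges {e}).Reachable u v := by
  obtain ⟨x, y⟩ := e
  rw [isBridge_iff, not_not] at he
  obtain ⟨p⟩ := huv
  induction p with
  | nil => rfl
  | @cons a b _ hab _ ih =>
    refine Reachable.trans ?_ ih
    by_cases hxy : s(a, b) = s(x, y)
    · rcases Sym2.eq_iff.mp hxy with ⟨rfl, rfl⟩ | ⟨rfl, rfl⟩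
      exacts [he, he.symm]
    · exact (deleteEdges_adj.mpr ⟨hab, hxy⟩).reachable

end SimpleGraph

open SimpleGraph

theorem statement18_general {V : Type} (G : SimpleGraph V) {v w : V}
    (C : G.Walk v v) (hC : C.IsCycle)
    (C' : G.Walk w w) (hC' : C'.IsCycle)
    (e e' : Sym2 V) (hee' : e ≠ e')
    (he : e ∈ C.edges)
    (he'C' : e' ∈ C'.edges) (heC' : e ∉ C'.edges) :
    ∃ (u : V) (Ct : G.Walk u u), Ct.IsCycle ∧
      e ∈ Ct.edges ∧ e' ∉ Ct.edges ∧
      ∀ f ∈ Ct.edges, f ∈ C.edges ∨ f ∈ C'.edges := by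
  set K := C.toSubgraph.spanningCoe ⊔ C'.toSubgraph.spanningCoe
  have hK : ∀ f, f ∈ K.edgeSet ↔ f ∈ C.edges ∨ f ∈ C'.edges := by simp [K]
  have hKG : K ≤ G := sup_le (Subgraph.spanningCoe_le _) (Subgraph.spanningCoe_le _)
  have he_nonbridge : ¬ K.IsBridge e := hC.not_isBridge he fun f hf ↦ (hK f).mpr (.inl hf)
  have he'_nonbridge : ¬ (K.deleteEdges {e}).IsBridge e' :=
    hC'.not_isBridge he'C' fun f hf ↦ by
      simp only [edgeSet_deleteEdges, Set.mem_sdiff, hK, Set.mem_singleton_iff]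
      exact ⟨.inr hf, fun h ↦ heC' (h ▸ hf)⟩
  obtain ⟨a, b⟩ := e
  have hreach : ((K.deleteEdges {e'}).deleteEdges {s(a, b)}).Reachable a b := by
    rw [deleteEdges_deleteEdges, Set.union_comm, ← deleteEdges_deleteEdges]
    exact (not_not.mp he_nonbridge).deleteEdges_of_not_isBridge he'_nonbridge
  have hadj : (K.deleteEdges {e'}).Adj a b := deleteEdges_adj.mpr ⟨(hK _).mpr (.inl he), hee'⟩
  obtain ⟨u, p, hp, hab⟩ := adj_and_reachable_delete_edges_iff_exists_cycle.mp ⟨hadj, hreach⟩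
  have hpK : ∀ f ∈ p.edges, f ∈ K.edgeSet \ {e'} := fun f hf ↦ by
    simpa [edgeSet_deleteEdges] using p.edges_subset_edgeSet hf
  refine ⟨u, p.mapLe ((deleteEdges_le _).trans hKG), (Walk.isCycle_mapLe _).mpr hp, ?_, ?_, ?_⟩
    <;> rw [Walk.edges_mapLe_eq_edges]
  · exact hab
  · exact fun h ↦ (hpK _ h).2 rfl
  · exact fun f hf ↦ (hK f).mp (hpK f hf).1

theorem statement18 {V : Type} (G : SimpleGraph V) {v w : V}
    (C : G.Walk v v) (hC : C.IsCycle)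
    (C' : G.Walk w w) (hC' : C'.IsCycle)
    (e e' : Sym2 V) (hee' : e ≠ e')
    (he : e ∈ C.edges) (he' : e' ∈ C.edges)
    (he'C' : e' ∈ C'.edges) (heC' : e ∉ C'.edges) :
    ∃ (u : V) (Ct : G.Walk u u), Ct.IsCycle ∧
      e ∈ Ct.edges ∧ e' ∉ Ct.edges ∧
      ∀ f ∈ Ct.edges, f ∈ C.edges ∨ f ∈ C'.edges :=
  statement18_general G C hC C' hC' e e' hee' he he'C' heC'
end

section
/- Let G be a simple graph, let e₁ and e₂ be two distinct edges of G, and let W be a closed walk in G whose list of traversed edges contains e₁ exactly once and contains e₂ an even number of times. Then there exists a vertex u and a closed walk W̃ in G based at u such that every edge traversed by W̃ is an edge traversed by W, the edge list of W̃ contains e₁ exactly once, and W̃ does not traverse e₂. -/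
lemma split_at_edge {V : Type} [DecidableEq V] {G : SimpleGraph V} {u w : V}
    (p : G.Walk u w) {e : Sym2 V} (he : e ∈ p.edges) :
    ∃ (x y : V) (h : G.Adj x y) (q : G.Walk u x) (r : G.Walk y w),
      p = q.append (SimpleGraph.Walk.cons h r) ∧ s(x, y) = e ∧ e ∉ q.edges := by
  induction p with
  | nil => simp at he
  | @cons a b c h' p' ih =>
    by_cases hc : e = s(a, b)
    · exact ⟨a, b, h', SimpleGraph.Walk.nil, p', by simp, hc.symm, by simp⟩
    · rw [SimpleGraph.Walk.edges_cons, List.mem_cons] at he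
      rcases he with he | he
      · exact absurd he hc
      · obtain ⟨x, y, h, q, r, rfl, hxy, hq⟩ := ih he
        refine ⟨x, y, h, SimpleGraph.Walk.cons h' q, r, by simp, hxy, ?_⟩
        simp only [SimpleGraph.Walk.edges_cons, List.mem_cons, not_or]
        exact ⟨hc, hq⟩

lemma aux19 {V : Type} [DecidableEq V] {G : SimpleGraph V} (e₁ e₂ : Sym2 V)
    (h12 : e₁ ≠ e₂) :
    ∀ n : ℕ, ∀ {v : V} (W : G.Walk v v), W.edges.count e₂ = n → Even n →
      W.edges.count e₁ = 1 →
      ∃ (u : V) (W' : G.Walk u u),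
        (∀ f ∈ W'.edges, f ∈ W.edges) ∧ W'.edges.count e₁ = 1 ∧ e₂ ∉ W'.edges := by
  intro n
  induction n using Nat.strong_induction_on with
  | _ n ih =>
    intro v W hn heven h1
    rcases Nat.eq_zero_or_pos n with h0 | hpos
    · subst h0
      exact ⟨v, W, fun f hf => hf, h1, List.count_eq_zero.mp hn⟩
    · have hn2 : 2 ≤ n := by rcases heven with ⟨k, hk⟩; omega
      have heven2 : Even (n - 2) := by rcases heven with ⟨k, hk⟩; exact ⟨k - 1, by omega⟩
      have hmem : e₂ ∈ W.edges := by rw [← List.count_pos_iff]; omega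
      obtain ⟨x, y, hxy, q, r, hW, hxye, hq⟩ := split_at_edge W hmem
      have hmem2 : e₂ ∈ r.edges := by
        have hcn := hn
        rw [hW] at hcn
        simp only [SimpleGraph.Walk.edges_append, SimpleGraph.Walk.edges_cons,
          List.count_append, List.count_cons] at hcn
        have hq0 : q.edges.count e₂ = 0 := List.count_eq_zero.mpr hq
        rw [← List.count_pos_iff]
        simp only [hxye, beq_self_eq_true, if_true] at hcn
        omega
      obtain ⟨x₂, y₂, hxy2, q₂, r₂, hr, hxye2, hq2⟩ := split_at_edge r hmem2
      have hq0 : q.edges.count e₂ = 0 := List.count_eq_zero.mpr hq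
      have hq20 : q₂.edges.count e₂ = 0 := List.count_eq_zero.mpr hq2
      have hWe : W.edges =
          q.edges ++ (s(x, y) :: (q₂.edges ++ s(x₂, y₂) :: r₂.edges)) := by
        rw [hW, hr]; simp [SimpleGraph.Walk.edges_append]
      have hr2cnt : r₂.edges.count e₂ = n - 2 := by
        rw [hWe] at hn
        simp only [List.count_append, List.count_cons, hxye, hxye2,
          beq_self_eq_true, if_true] at hn
        omega
      have h1' : q.edges.count e₁ + q₂.edges.count e₁ + r₂.edges.count e₁ = 1 := by
        rw [hWe] at h1
        have hne1 : (s(x, y) == e₁) = false := by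
          rw [beq_eq_false_iff_ne]; rw [hxye]; exact fun h => h12 h.symm
        have hne2 : (s(x₂, y₂) == e₁) = false := by
          rw [beq_eq_false_iff_ne]; rw [hxye2]; exact fun h => h12 h.symm
        simp only [List.count_append, List.count_cons, hne1, hne2, if_false] at h1
        omega
      have hsub : ∀ f, (f ∈ q.edges ∨ f ∈ q₂.edges ∨ f ∈ r₂.edges) → f ∈ W.edges := by
        intro f hf
        rw [hWe]
        simp only [List.mem_append, List.mem_cons]
        tauto
      have hdir : s(x₂, y₂) = s(x, y) := hxye2.trans hxye.symm
      rw [Sym2.eq_iff] at hdir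
      rcases hdir with ⟨hx2, hy2⟩ | ⟨hx2, hy2⟩
      · -- same direction: x₂ = x, y₂ = y
        subst hx2; subst hy2
        -- q : Walk v x, q₂ : Walk y x, r₂ : Walk y v
        set W' := q.append (q₂.reverse.append r₂) with hW'
        have hW'edges : W'.edges = q.edges ++ (q₂.edges.reverse ++ r₂.edges) := by
          simp [hW', SimpleGraph.Walk.edges_append, SimpleGraph.Walk.edges_reverse]
        have hW'e : W'.edges.count e₂ = n - 2 := by
          rw [hW'edges]
          simp only [List.count_append, List.count_reverse, hq0, hq20, hr2cnt]; omega
        have hW'1 : W'.edges.count e₁ = 1 := by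
          rw [hW'edges]
          simp only [List.count_append, List.count_reverse]
          omega
        obtain ⟨u, W'', hsub'', hc1, hc2⟩ :=
          ih (n - 2) (by omega) W' hW'e heven2 hW'1
        refine ⟨u, W'', fun f hf => ?_, hc1, hc2⟩
        have hmf := hsub'' f hf
        rw [hW'edges] at hmf
        simp only [List.mem_append, List.mem_reverse] at hmf
        exact hsub f (by tauto)
      · -- opposite direction: x₂ = y, y₂ = x
        subst hx2; subst hy2
        -- q : Walk v x, q₂ : Walk y y, r₂ : Walk x v
        rcases Nat.eq_zero_or_pos (q₂.edges.count e₁) with hz | hp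
        · set W' := q.append r₂ with hW'
          have hW'edges : W'.edges = q.edges ++ r₂.edges := by
            simp [hW', SimpleGraph.Walk.edges_append]
          have hW'e : W'.edges.count e₂ = n - 2 := by
            rw [hW'edges]; simp only [List.count_append, hq0, hr2cnt]; omega
          have hW'1 : W'.edges.count e₁ = 1 := by
            rw [hW'edges]; simp only [List.count_append]; omega
          obtain ⟨u, W'', hsub'', hc1, hc2⟩ :=
            ih (n - 2) (by omega) W' hW'e heven2 hW'1
          refine ⟨u, W'', fun f hf => ?_, hc1, hc2⟩
          have hmf := hsub'' f hf
          rw [hW'edges] at hmf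
          simp only [List.mem_append] at hmf
          exact hsub f (by tauto)
        · exact ⟨_, q₂, fun f hf => hsub f (Or.inr (Or.inl hf)), by omega, hq2⟩

theorem statement19 {V : Type} [DecidableEq V] (G : SimpleGraph V) {v : V}
    (W : G.Walk v v) (e₁ e₂ : Sym2 V) (h12 : e₁ ≠ e₂)
    (h1 : W.edges.count e₁ = 1) (h2 : Even (W.edges.count e₂)) :
    ∃ (u : V) (W' : G.Walk u u),
      (∀ f ∈ W'.edges, f ∈ W.edges) ∧
      W'.edges.count e₁ = 1 ∧ e₂ ∉ W'.edges := by
  exact aux19 e₁ e₂ h12 _ W rfl h2 h1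
end
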